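/- arXiv:1110.6398 — 8 statements merged into one kernel-verified Lean document; each statement's English description precedes it below -/
import Mathlib

section
/- Let b ≥ 2 be an integer, let p be a prime and α ≥ 1 an integer with p^α ∣ b and p^{α+1} ∤ b. Let D be a finite nonempty set of nonnegative integers satisfying the Kenyon condition with respect to b. Then for every ℓ with 0 ≤ ℓ ≤ α−1 there exists an integer a ≥ 1 with a ≡ ℓ (mod α) such that the cyclotomic polynomial Φ_{p^a}(X) divides P_D(X) in ℤ[X]. -/
/-!
Write `b = p ^ α * u` with `p ∤ u`, put `N = deg P_D` and fix `t < α` with `t ≡ -ℓ (mod α)`.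
Applying the Kenyon condition to `m = p ^ t * u ^ (N + t)` gives a `k ≥ 1` such that
`m / b ^ k = u ^ (N + t - k) / (p ^ a * u ^ (k - N - t))` in lowest terms, where `a = α k - t`.
So `P_D` vanishes at a primitive root of unity of order `p ^ a * u ^ (k - N - t)`, and the
corresponding cyclotomic polynomial divides `P_D`. Comparing degrees, `a ≤ φ(p ^ a) ≤ N`, which
forces `k ≤ N + t`; hence that order is exactly `p ^ a`, and `a ≡ ℓ (mod α)`.
-/

open Polynomial

/-- The mask polynomial `P_A(X) = ∑_{a ∈ A} X^a ∈ ℤ[X]` of a finite set of naturals. -/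
noncomputable def mask (A : Finset ℕ) : Polynomial ℤ := ∑ a ∈ A, X ^ a

/-- The Kenyon condition with respect to `b`: for every `m ≥ 1` there is `k ≥ 1` with
`P_D(e^{2πim/b^k}) = 0`. -/
def Kenyon (b : ℕ) (D : Finset ℕ) : Prop :=
  ∀ m : ℕ, 1 ≤ m → ∃ k : ℕ, 1 ≤ k ∧
    Polynomial.aeval (Complex.exp (2 * Real.pi * Complex.I * (m : ℂ) / (b : ℂ) ^ k)) (mask D) = 0

open Complex
open scoped Nat

theorem Nat.le_totient_prime_pow {p : ℕ} (hp : p.Prime) (a : ℕ) : a ≤ φ (p ^ a) := by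
  rcases Nat.eq_zero_or_pos a with rfl | ha
  · exact Nat.zero_le _
  rw [Nat.totient_prime_pow hp ha]
  calc a ≤ p ^ (a - 1) := by have := Nat.lt_pow_self (n := a - 1) hp.one_lt; omega
    _ ≤ p ^ (a - 1) * (p - 1) := Nat.le_mul_of_pos_right _ (Nat.sub_pos_of_lt hp.one_lt)

theorem Nat.mul_sub_mod_mod_self {α ℓ k : ℕ} (hℓ : ℓ < α) (hk : 1 ≤ k) :
    (α * k - (α - ℓ) % α) % α = ℓ := by
  obtain ⟨k, rfl⟩ : ∃ k', k = k' + 1 := ⟨k - 1, by omega⟩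
  rcases Nat.eq_zero_or_pos ℓ with rfl | hℓ0
  · rw [Nat.sub_zero, Nat.mod_self, Nat.sub_zero, Nat.mul_mod_right]
  · rw [Nat.mod_eq_of_lt (by omega : α - ℓ < α),
      show α * (k + 1) - (α - ℓ) = ℓ + α * k by rw [mul_add]; omega,
      Nat.add_mul_mod_self_left, Nat.mod_eq_of_lt hℓ]

theorem mask_ne_zero {A : Finset ℕ} (hA : A.Nonempty) : mask A ≠ 0 := by
  intro h
  have : (mask A).eval 1 = (A.card : ℤ) := by simp [mask, eval_finsetSum]
  rw [h, eval_zero] at this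
  have := hA.card_pos
  omega

theorem IsPrimitiveRoot.cyclotomic_dvd_of_aeval_eq_zero {K : Type*} [Field K] [CharZero K]
    {μ : K} {n : ℕ} (hμ : IsPrimitiveRoot μ n) (hn : 0 < n) {f : ℤ[X]} (hf : aeval μ f = 0) :
    cyclotomic n ℤ ∣ f := by
  rw [cyclotomic_eq_minpoly hμ hn]
  exact minpoly.isIntegrallyClosed_dvd (hμ.isIntegral hn) hf

theorem le_natDegree_of_cyclotomic_dvd {p a n : ℕ} (hp : p.Prime) (hpa : p ^ a ∣ n) (hn : 0 < n)
    {f : ℤ[X]} (hf : f ≠ 0) (hdvd : cyclotomic n ℤ ∣ f) : a ≤ f.natDegree :=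
  calc a ≤ φ (p ^ a) := Nat.le_totient_prime_pow hp a
    _ ≤ φ n := Nat.le_of_dvd (Nat.totient_pos.2 hn) (Nat.totient_dvd_of_dvd hpa)
    _ = (cyclotomic n ℤ).natDegree := (natDegree_cyclotomic n ℤ).symm
    _ ≤ f.natDegree := natDegree_le_of_dvd hdvd hf

theorem isPrimitiveRoot_exp_of_mul_eq {m B c n : ℕ} (hB : B ≠ 0) (hn : n ≠ 0)
    (h : m * n = B * c) (hcop : c.Coprime n) :
    IsPrimitiveRoot (exp (2 * Real.pi * I * m / B)) n := by
  have hq : (m : ℂ) / B = c / n := by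
    rw [div_eq_div_iff (by exact_mod_cast hB) (by exact_mod_cast hn)]
    exact_mod_cast h.trans (mul_comm B c)
  rw [mul_div_assoc, hq]
  exact isPrimitiveRoot_exp_of_coprime c n hn hcop

/-- `p ^ t * u ^ M / (p ^ α * u) ^ k = u ^ (M - k) / (p ^ (α * k - t) * u ^ (k - M))`, and the
right-hand side is in lowest terms since one of the two powers of `u` is `1`. -/
theorem isPrimitiveRoot_exp_prime_pow_mul {p u α t M k : ℕ} (hp : p.Prime) (hu : ¬ p ∣ u)
    (hu0 : u ≠ 0) (ht : t ≤ α * k) :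
    IsPrimitiveRoot (exp (2 * Real.pi * I * ((p ^ t * u ^ M : ℕ) : ℂ) / ((p ^ α * u : ℕ) : ℂ) ^ k))
      (p ^ (α * k - t) * u ^ (k - M)) := by
  have hp0 := hp.ne_zero
  rw [← Nat.cast_pow]
  refine isPrimitiveRoot_exp_of_mul_eq (c := u ^ (M - k)) (by positivity) (by positivity) ?_ ?_
  · calc p ^ t * u ^ M * (p ^ (α * k - t) * u ^ (k - M))
        = p ^ (t + (α * k - t)) * u ^ (M + (k - M)) := by ring
      _ = p ^ (α * k) * u ^ (k + (M - k)) := by congr 2 <;> omega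
      _ = (p ^ α * u) ^ k * u ^ (M - k) := by ring
  · rcases le_total M k with hMk | hkM
    · rw [Nat.sub_eq_zero_of_le hMk, pow_zero]
      exact Nat.coprime_one_left _
    · rw [Nat.sub_eq_zero_of_le hkM, pow_zero, mul_one]
      exact ((Nat.coprime_comm.1 ((hp.coprime_iff_not_dvd).2 hu)).pow _ _)

theorem stmt0_general (b p α : ℕ) (hp : p.Prime)
    (hdvd : p ^ α ∣ b) (hndvd : ¬ p ^ (α + 1) ∣ b)
    (D : Finset ℕ) (hD : D.Nonempty) (hK : Kenyon b D) :
    ∀ ℓ : ℕ, ℓ < α → ∃ a : ℕ, 1 ≤ a ∧ a % α = ℓ ∧ cyclotomic (p ^ a) ℤ ∣ mask D := by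
  intro ℓ hℓ
  obtain ⟨u, rfl⟩ := hdvd
  have hu : ¬ p ∣ u := fun ⟨c, hc⟩ => hndvd ⟨c, by rw [hc, pow_succ, mul_assoc]⟩
  have hu0 : u ≠ 0 := by rintro rfl; exact hndvd ⟨0, by simp⟩
  have hp0 := hp.ne_zero
  set N := (mask D).natDegree
  obtain ⟨t, ht_def⟩ : ∃ t, (α - ℓ) % α = t := ⟨_, rfl⟩
  have ht : t < α := ht_def ▸ Nat.mod_lt _ (by omega)
  obtain ⟨k, hk, hroot⟩ := hK (p ^ t * u ^ (N + t)) (Nat.one_le_iff_ne_zero.2 (by positivity))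
  have hαk : k ≤ α * k ∧ α ≤ α * k :=
    ⟨Nat.le_mul_of_pos_left k (by omega), Nat.le_mul_of_pos_right α hk⟩
  have hprim := isPrimitiveRoot_exp_prime_pow_mul (M := N + t) hp hu hu0 (by omega : t ≤ α * k)
  have hcyc := hprim.cyclotomic_dvd_of_aeval_eq_zero (by positivity) hroot
  have hdeg : α * k - t ≤ N := le_natDegree_of_cyclotomic_dvd hp (dvd_mul_right _ _)
    (by positivity) (mask_ne_zero hD) hcyc
  rw [Nat.sub_eq_zero_of_le (by omega : k ≤ N + t), pow_zero, mul_one] at hcyc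
  exact ⟨α * k - t, by omega, ht_def ▸ Nat.mul_sub_mod_mod_self hℓ hk, hcyc⟩

theorem stmt0 (b p α : ℕ) (hb : 2 ≤ b) (hp : p.Prime) (hα : 1 ≤ α)
    (hdvd : p ^ α ∣ b) (hndvd : ¬ p ^ (α + 1) ∣ b)
    (D : Finset ℕ) (hD : D.Nonempty) (hK : Kenyon b D) :
    ∀ ℓ : ℕ, ℓ < α → ∃ a : ℕ, 1 ≤ a ∧ a % α = ℓ ∧ cyclotomic (p ^ a) ℤ ∣ mask D :=
  stmt0_general b p α hp hdvd hndvd D hD hK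
end

section
/- Let b ≥ 2 be an integer and let d_1, d_2 be two distinct divisors of b with d_1 > 1 and d_2 > 1. Then for any integers u_1, u_2 ≥ 0, the polynomials Φ_{d_1}(X^{b^{u_1}}) and Φ_{d_2}(X^{b^{u_2}}) have no nonconstant common factor in ℤ[X] (equivalently, they have no common complex root). -/
/-!
If `z` were a common root, then `z ^ b ^ u₁` and `z ^ b ^ u₂` would be primitive roots of unity
of orders `d₁` and `d₂`. For `u₁ < u₂`, raising `z ^ b ^ u₁` to the power `b` already gives `1`
because `d₁ ∣ b`, so `z ^ b ^ u₂ = 1`, forcing `d₂ = 1`; for `u₁ = u₂` the orders agree.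
A nonconstant common factor in `ℤ[X]` would have a complex root, which is then a common root.
-/

open Polynomial

theorem aeval_cyclotomic_comp_X_pow_eq_zero_iff {K : Type*} [CommRing K] [IsDomain K]
    {d : ℕ} [NeZero (d : K)] (m : ℕ) (z : K) :
    aeval z ((cyclotomic d ℤ).comp (X ^ m)) = 0 ↔ IsPrimitiveRoot (z ^ m) d := by
  rw [aeval_comp, map_pow, aeval_X, ← isRoot_cyclotomic_iff, aeval_def, ← eval_map,
    map_cyclotomic, IsRoot.def]

theorem IsPrimitiveRoot.pow_pow_eq_one_of_lt {M : Type*} [CommMonoid M] {z : M} {b d u₁ u₂ : ℕ}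
    (h : IsPrimitiveRoot (z ^ b ^ u₁) d) (hd : d ∣ b) (hu : u₁ < u₂) : z ^ b ^ u₂ = 1 := by
  obtain ⟨k, hk⟩ := pow_dvd_pow b (Nat.succ_le_of_lt hu)
  rw [hk, pow_mul, pow_succ, pow_mul, (h.pow_eq_one_iff_dvd b).mpr hd, one_pow]

theorem IsPrimitiveRoot.eq_of_pow_pow_of_dvd {M : Type*} [CommMonoid M] {z : M}
    {b d₁ d₂ u₁ u₂ : ℕ}
    (h₁ : IsPrimitiveRoot (z ^ b ^ u₁) d₁) (h₂ : IsPrimitiveRoot (z ^ b ^ u₂) d₂)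
    (hd₁ : d₁ ∣ b) (hd₂ : d₂ ∣ b) (hd₁' : d₁ ≠ 1) (hd₂' : d₂ ≠ 1) : d₁ = d₂ := by
  rcases lt_trichotomy u₁ u₂ with hu | rfl | hu
  · rw [h₁.pow_pow_eq_one_of_lt hd₁ hu, IsPrimitiveRoot.one_left_iff] at h₂
    exact absurd h₂ hd₂'
  · exact h₁.unique h₂
  · rw [h₂.pow_pow_eq_one_of_lt hd₂ hu, IsPrimitiveRoot.one_left_iff] at h₁
    exact absurd h₁ hd₁'

theorem Polynomial.degree_nonpos_of_dvd_of_dvd_of_no_common_root {R K : Type*} [CommRing R]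
    [Field K] [IsAlgClosed K] [Algebra R K] [FaithfulSMul R K] {f p q : R[X]}
    (h : ∀ z : K, aeval z p = 0 → aeval z q ≠ 0) (hp : f ∣ p) (hq : f ∣ q) : f.degree ≤ 0 := by
  by_contra hf
  obtain ⟨z, hz⟩ := IsAlgClosed.exists_aeval_eq_zero K f (ne_of_gt (not_le.mp hf))
  exact h z (aeval_eq_zero_of_dvd_aeval_eq_zero hp hz) (aeval_eq_zero_of_dvd_aeval_eq_zero hq hz)

theorem stmt2_general (b : ℕ) (d₁ d₂ : ℕ) (hd₁ : d₁ ∣ b) (hd₂ : d₂ ∣ b)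
    (hd₁' : 1 < d₁) (hd₂' : 1 < d₂) (hne : d₁ ≠ d₂) (u₁ u₂ : ℕ) :
    (∀ f : Polynomial ℤ, f ∣ (cyclotomic d₁ ℤ).comp (X ^ b ^ u₁) →
      f ∣ (cyclotomic d₂ ℤ).comp (X ^ b ^ u₂) → f.degree ≤ 0) ∧
    (∀ z : ℂ, Polynomial.aeval z ((cyclotomic d₁ ℤ).comp (X ^ b ^ u₁)) = 0 →
      Polynomial.aeval z ((cyclotomic d₂ ℤ).comp (X ^ b ^ u₂)) ≠ 0) := by
  have : NeZero (d₁ : ℂ) := ⟨by exact_mod_cast (by omega : d₁ ≠ 0)⟩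
  have : NeZero (d₂ : ℂ) := ⟨by exact_mod_cast (by omega : d₂ ≠ 0)⟩
  have no_common_root : ∀ z : ℂ, aeval z ((cyclotomic d₁ ℤ).comp (X ^ b ^ u₁)) = 0 →
      aeval z ((cyclotomic d₂ ℤ).comp (X ^ b ^ u₂)) ≠ 0 := by
    intro z h₁ h₂
    rw [aeval_cyclotomic_comp_X_pow_eq_zero_iff] at h₁ h₂
    exact hne (h₁.eq_of_pow_pow_of_dvd h₂ hd₁ hd₂ hd₁'.ne' hd₂'.ne')
  exact ⟨fun f => degree_nonpos_of_dvd_of_dvd_of_no_common_root no_common_root, no_common_root⟩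

/-- Two distinct divisors `d₁, d₂ > 1` of `b` give polynomials `Φ_{d₁}(X^{b^{u₁}})` and
`Φ_{d₂}(X^{b^{u₂}})` with no nonconstant common factor in `ℤ[X]`, equivalently no common
complex root. -/
theorem stmt2 (b : ℕ) (hb : 2 ≤ b) (d₁ d₂ : ℕ) (hd₁ : d₁ ∣ b) (hd₂ : d₂ ∣ b)
    (hd₁' : 1 < d₁) (hd₂' : 1 < d₂) (hne : d₁ ≠ d₂) (u₁ u₂ : ℕ) :
    (∀ f : Polynomial ℤ, f ∣ (cyclotomic d₁ ℤ).comp (X ^ b ^ u₁) →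
      f ∣ (cyclotomic d₂ ℤ).comp (X ^ b ^ u₂) → f.degree ≤ 0) ∧
    (∀ z : ℂ, Polynomial.aeval z ((cyclotomic d₁ ℤ).comp (X ^ b ^ u₁)) = 0 →
      Polynomial.aeval z ((cyclotomic d₂ ℤ).comp (X ^ b ^ u₂)) ≠ 0) :=
  stmt2_general b d₁ d₂ hd₁ hd₂ hd₁' hd₂' hne u₁ u₂
end

section
/- Let b ≥ 2, let E_0, E_1, …, E_k be finite sets of nonnegative integers such that P_{E_0}(X)·P_{E_1}(X)⋯P_{E_k}(X) ≡ 1 + X + ⋯ + X^{b−1} (mod X^b − 1) in ℤ[X], let 0 ≤ l_1 ≤ ⋯ ≤ l_k be integers, and let D be a set of nonnegative integers with P_D(X) = P_{E_0}(X)·P_{E_1}(X^{b^{l_1}})⋯P_{E_k}(X^{b^{l_k}}) (a product-form digit set). Then D satisfies condition (P1) with respect to b, and hence the Kenyon condition with respect to b. -/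
open Polynomial

/-- Condition (P1). -/
def CondP1 (b : ℕ) (D : Finset ℕ) : Prop :=
  ∀ d : ℕ, d ∣ b → 1 < d → ∃ j : ℕ, (cyclotomic d ℤ).comp (X ^ b ^ j) ∣ mask D

/-!
Let `1 < d ∣ b`. Then `Φ_d` divides `1 + X + ⋯ + X^(b-1)`, hence also `X^b - 1`, hence the product
of the `P_{E_i}`; being irreducible, it divides a single factor `P_{E_i}`, so `Φ_d(X^(b^(l_i)))`
divides `P_D`. For the Kenyon condition write `m = b^t m₀` with `b ∤ m₀`: the `b^j`-th power of
`e^(2πi m / b^(t+j+1))` is `e^(2πi m₀ / b)`, a primitive root of unity of order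
`b / gcd(m₀, b)`, which is a divisor of `b` exceeding `1`.
-/

open Complex in
theorem Complex.isPrimitiveRoot_exp_div_gcd (i n : ℕ) (hn : n ≠ 0) :
    IsPrimitiveRoot (exp (2 * Real.pi * I * (i / n))) (n / i.gcd n) := by
  have hg : 0 < i.gcd n := Nat.gcd_pos_of_pos_right i (Nat.pos_of_ne_zero hn)
  have hgC : (i.gcd n : ℂ) ≠ 0 := by exact_mod_cast hg.ne'
  convert isPrimitiveRoot_exp_of_coprime _ _ ?_ (Nat.coprime_div_gcd_div_gcd hg) using 3
  · rw [Nat.cast_div (i.gcd_dvd_left n) hgC, Nat.cast_div (i.gcd_dvd_right n) hgC,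
      div_div_div_cancel_right₀ hgC]
  · exact (Nat.div_pos (Nat.le_of_dvd (Nat.pos_of_ne_zero hn) (i.gcd_dvd_right n)) hg).ne'

theorem Polynomial.aeval_eq_zero_of_cyclotomic_comp_dvd {R : Type*} [CommRing R] [IsDomain R]
    {d n : ℕ} {p : ℤ[X]} {z : R} (hd : 0 < d) (hp : (cyclotomic d ℤ).comp (X ^ n) ∣ p)
    (hz : IsPrimitiveRoot (z ^ n) d) : aeval z p = 0 := by
  obtain ⟨q, rfl⟩ := hp
  have hroot : aeval (z ^ n) (cyclotomic d ℤ) = 0 := by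
    simpa [aeval_def, eval₂_eq_eval_map] using hz.isRoot_cyclotomic hd
  rw [map_mul, aeval_comp, map_pow, aeval_X, hroot, zero_mul]

theorem Polynomial.cyclotomic_dvd_of_dvd_sub_geom_sum {R : Type*} [Ring R] {d b : ℕ}
    (hdb : d ∣ b) (hd : d ≠ 1) {p : R[X]} (h : X ^ b - 1 ∣ p - ∑ i ∈ Finset.range b, X ^ i) :
    cyclotomic d R ∣ p := by
  have hgeom := cyclotomic_dvd_geom_sum_of_dvd R hdb hd
  have hXb : cyclotomic d R ∣ X ^ b - 1 := hgeom.trans ⟨X - 1, (geom_sum_mul X b).symm⟩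
  simpa using dvd_add (hXb.trans h) hgeom

theorem one_lt_div_gcd_of_not_dvd {b m : ℕ} (hb : b ≠ 0) (h : ¬ b ∣ m) : 1 < b / m.gcd b := by
  obtain ⟨d, hd⟩ := m.gcd_dvd_right b
  have hg : 0 < m.gcd b := Nat.gcd_pos_of_pos_right m (Nat.pos_of_ne_zero hb)
  rw [Nat.div_eq_of_eq_mul_right hg hd]
  rcases d with _ | _ | d
  · exact absurd hd hb
  · rw [zero_add, mul_one] at hd
    exact (h (by rw [hd]; exact m.gcd_dvd_left b)).elim
  · omega

theorem condP1_of_mask_eq_prod {ι : Type*} {b : ℕ} {D : Finset ℕ} (s : Finset ι)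
    (E : ι → Finset ℕ) (l : ι → ℕ)
    (hE : X ^ b - 1 ∣ ∏ i ∈ s, mask (E i) - ∑ i ∈ Finset.range b, (X : ℤ[X]) ^ i)
    (hD : mask D = ∏ i ∈ s, (mask (E i)).comp (X ^ b ^ l i)) : CondP1 b D := by
  intro d hdb hd
  obtain ⟨i, hi, hdvd⟩ := (cyclotomic.irreducible (by omega)).prime.exists_mem_finset_dvd
    (cyclotomic_dvd_of_dvd_sub_geom_sum hdb hd.ne' hE)
  exact ⟨l i, hD ▸ (map_dvd (compRingHom _) hdvd).trans (Finset.dvd_prod_of_mem _ hi)⟩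

theorem CondP1.kenyon {b : ℕ} {D : Finset ℕ} (hb : 1 < b) (h : CondP1 b D) : Kenyon b D := by
  intro m hm
  obtain ⟨t, m₀, hm₀, rfl⟩ := Nat.exists_eq_pow_mul_and_not_dvd (by omega : m ≠ 0) b hb.ne'
  have hd := one_lt_div_gcd_of_not_dvd (by omega) hm₀
  obtain ⟨j, hj⟩ := h _ (Nat.div_dvd_of_dvd (m₀.gcd_dvd_right b)) hd
  refine ⟨t + j + 1, by omega, aeval_eq_zero_of_cyclotomic_comp_dvd (by omega) hj ?_⟩
  have hbC : (b : ℂ) ≠ 0 := by exact_mod_cast (by omega : b ≠ 0)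
  have hpow :
      Complex.exp (2 * Real.pi * Complex.I * ((b ^ t * m₀ : ℕ) : ℂ) / (b : ℂ) ^ (t + j + 1)) ^ b ^ j
        = Complex.exp (2 * Real.pi * Complex.I * (m₀ / b)) := by
    rw [← Complex.exp_nat_mul]
    congr 1
    push_cast
    field_simp
    ring
  rw [hpow]
  exact Complex.isPrimitiveRoot_exp_div_gcd m₀ b (by omega)

theorem stmt4_general (b k : ℕ) (hb : 2 ≤ b) (E : ℕ → Finset ℕ)
    (l : ℕ → ℕ)
    (hE : (X ^ b - 1 : Polynomial ℤ) ∣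
      ((∏ i ∈ Finset.range (k + 1), mask (E i)) - ∑ i ∈ Finset.range b, (X : Polynomial ℤ) ^ i))
    (D : Finset ℕ)
    (hD : mask D = ∏ i ∈ Finset.range (k + 1), (mask (E i)).comp (X ^ b ^ l i)) :
    CondP1 b D ∧ Kenyon b D :=
  have hP1 := condP1_of_mask_eq_prod _ E l hE hD
  ⟨hP1, hP1.kenyon hb⟩

/-- A product-form digit set satisfies (P1), hence the Kenyon condition. -/
theorem stmt4 (b k : ℕ) (hb : 2 ≤ b) (E : ℕ → Finset ℕ)
    (l : ℕ → ℕ) (hl0 : l 0 = 0) (hlmono : ∀ i : ℕ, i < k → l i ≤ l (i + 1))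
    (hE : (X ^ b - 1 : Polynomial ℤ) ∣
      ((∏ i ∈ Finset.range (k + 1), mask (E i)) - ∑ i ∈ Finset.range b, (X : Polynomial ℤ) ^ i))
    (D : Finset ℕ)
    (hD : mask D = ∏ i ∈ Finset.range (k + 1), (mask (E i)).comp (X ^ b ^ l i)) :
    CondP1 b D ∧ Kenyon b D :=
  stmt4_general b k hb E l hE D hD
end

section
/- Let b ≥ 2 and let D be a finite set of nonnegative integers satisfying condition (P2) with respect to b. Then D satisfies the Kenyon condition with respect to b (hence, when #D = b, D is a tile digit set). -/
open Polynomial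

/-- Condition (P2): for each divisor `d > 1` of `b` there is a minimal `j₁` for which some
`Φ_t` (`t > 1`) divides both `Φ_d(X^{b^{j₁}})` and `P_D(X)`, and for every `t > 1` with
`Φ_t(X) ∣ Φ_d(X^{b^{j₁}})` there is `j₂ ≥ 0` with `Φ_t(X^{b^{j₂}}) ∣ P_D(X)`. -/
def CondP2 (b : ℕ) (D : Finset ℕ) : Prop :=
  ∀ d : ℕ, d ∣ b → 1 < d →
    ∃ j₁ : ℕ,
      (∃ t : ℕ, 1 < t ∧ cyclotomic t ℤ ∣ (cyclotomic d ℤ).comp (X ^ b ^ j₁) ∧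
        cyclotomic t ℤ ∣ mask D) ∧
      (∀ j : ℕ, (∃ t : ℕ, 1 < t ∧ cyclotomic t ℤ ∣ (cyclotomic d ℤ).comp (X ^ b ^ j) ∧
        cyclotomic t ℤ ∣ mask D) → j₁ ≤ j) ∧
      (∀ t : ℕ, 1 < t → cyclotomic t ℤ ∣ (cyclotomic d ℤ).comp (X ^ b ^ j₁) →
        ∃ j₂ : ℕ, (cyclotomic t ℤ).comp (X ^ b ^ j₂) ∣ mask D)

/-!
Put `ζ_k = e^{2πi m/b^k}`, so that `ζ_{k+j}^{b^j} = ζ_k`. For the least `k₀` with `ζ_{k₀} ≠ 1`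
the order `d` of `ζ_{k₀}` is a divisor `> 1` of `b`. Since `ζ_{k₀+j₁}` is a root of
`Φ_d(X^{b^{j₁}})`, its order `t > 1` satisfies `Φ_t ∣ Φ_d(X^{b^{j₁}})` (cyclotomic polynomials
are minimal polynomials over `ℤ`), so (P2) gives `Φ_t(X^{b^{j₂}}) ∣ P_D`, and `ζ_{k₀+j₁+j₂}`,
whose `b^{j₂}`-th power is `ζ_{k₀+j₁}`, is a root of `P_D`.
-/

section Cyclotomic

variable {K : Type*} [Field K] [CharZero K] {x : K}

theorem aeval_cyclotomic_orderOf (hx : IsOfFinOrder x) :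
    aeval x (cyclotomic (orderOf x) ℤ) = 0 := by
  rw [cyclotomic_eq_minpoly (IsPrimitiveRoot.orderOf x) hx.orderOf_pos]
  exact minpoly.aeval ℤ x

theorem cyclotomic_orderOf_dvd_comp_X_pow (hx : IsOfFinOrder x) (N : ℕ) :
    cyclotomic (orderOf x) ℤ ∣ (cyclotomic (orderOf (x ^ N)) ℤ).comp (X ^ N) := by
  rw [cyclotomic_eq_minpoly (IsPrimitiveRoot.orderOf x) hx.orderOf_pos]
  refine minpoly.isIntegrallyClosed_dvd ((IsPrimitiveRoot.orderOf x).isIntegral hx.orderOf_pos) ?_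
  rw [aeval_comp, map_pow, aeval_X]
  exact aeval_cyclotomic_orderOf hx.pow

theorem aeval_eq_zero_of_cyclotomic_comp_X_pow_dvd (hx : IsOfFinOrder x) {N : ℕ} {p : ℤ[X]}
    (hp : (cyclotomic (orderOf (x ^ N)) ℤ).comp (X ^ N) ∣ p) : aeval x p = 0 := by
  obtain ⟨q, rfl⟩ := hp
  rw [map_mul, aeval_comp, map_pow, aeval_X, aeval_cyclotomic_orderOf hx.pow, zero_mul]

end Cyclotomic

theorem IsOfFinOrder.one_lt_orderOf {G : Type*} [Monoid G] {x : G} (hx : IsOfFinOrder x)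
    (h1 : x ≠ 1) : 1 < orderOf x :=
  Nat.one_lt_iff_ne_zero_and_ne_one.mpr ⟨hx.orderOf_pos.ne', mt orderOf_eq_one_iff.mp h1⟩

noncomputable def kenyonRoot (b m k : ℕ) : ℂ :=
  Complex.exp (2 * Real.pi * Complex.I * (m : ℂ) / (b : ℂ) ^ k)

section KenyonRoot

variable {b : ℕ} (m : ℕ)

theorem kenyonRoot_eq_pow (k : ℕ) :
    kenyonRoot b m k = Complex.exp (2 * Real.pi * Complex.I / (b ^ k : ℕ)) ^ m := by
  rw [kenyonRoot, ← Complex.exp_nat_mul]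
  push_cast
  ring_nf

theorem kenyonRoot_eq_one_iff (hb : b ≠ 0) {k : ℕ} : kenyonRoot b m k = 1 ↔ b ^ k ∣ m := by
  rw [kenyonRoot_eq_pow]
  exact (Complex.isPrimitiveRoot_exp _ (pow_ne_zero k hb)).pow_eq_one_iff_dvd m

theorem kenyonRoot_add_pow (hb : b ≠ 0) (k j : ℕ) :
    kenyonRoot b m (k + j) ^ b ^ j = kenyonRoot b m k := by
  have hbC : (b : ℂ) ≠ 0 := Nat.cast_ne_zero.mpr hb
  rw [kenyonRoot, kenyonRoot, ← Complex.exp_nat_mul]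
  congr 1
  push_cast
  field_simp
  ring

theorem isOfFinOrder_kenyonRoot (hb : b ≠ 0) (k : ℕ) : IsOfFinOrder (kenyonRoot b m k) := by
  refine isOfFinOrder_iff_pow_eq_one.mpr ⟨b ^ k, Nat.pos_of_ne_zero (pow_ne_zero k hb), ?_⟩
  have hpow := kenyonRoot_add_pow m hb 0 k
  rw [zero_add] at hpow
  rw [hpow, kenyonRoot_eq_one_iff m hb, pow_zero]
  exact one_dvd m

theorem exists_kenyonRoot_ne_one_pow_eq_one (hb : 2 ≤ b) (hm : 0 < m) :
    ∃ k, 1 ≤ k ∧ kenyonRoot b m k ≠ 1 ∧ kenyonRoot b m k ^ b = 1 := by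
  classical
  have hb0 : b ≠ 0 := by omega
  have hex : ∃ k, kenyonRoot b m k ≠ 1 := ⟨m, fun h =>
    Nat.not_dvd_of_pos_of_lt hm (Nat.lt_pow_self hb) ((kenyonRoot_eq_one_iff m hb0).mp h)⟩
  obtain ⟨k, hk⟩ : ∃ k, Nat.find hex = k + 1 := Nat.exists_eq_succ_of_ne_zero fun h =>
    Nat.find_spec hex (h ▸ (kenyonRoot_eq_one_iff m hb0).mpr (by simp))
  refine ⟨k + 1, by omega, hk ▸ Nat.find_spec hex, ?_⟩
  have hstep := kenyonRoot_add_pow m hb0 k 1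
  rw [pow_one] at hstep
  rw [hstep]
  exact not_not.mp (Nat.find_min hex (by omega))

end KenyonRoot

theorem stmt8 (b : ℕ) (hb : 2 ≤ b) (D : Finset ℕ) (hP2 : CondP2 b D) :
    Kenyon b D := by
  intro m hm
  have hb0 : b ≠ 0 := by omega
  have hfin := isOfFinOrder_kenyonRoot m hb0
  have hζ := kenyonRoot_add_pow m hb0
  obtain ⟨k₀, hk₀, hne, hpow⟩ := exists_kenyonRoot_ne_one_pow_eq_one m hb hm
  obtain ⟨j₁, -, -, hlift⟩ := hP2 (orderOf (kenyonRoot b m k₀))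
    (orderOf_dvd_of_pow_eq_one hpow) ((hfin k₀).one_lt_orderOf hne)
  obtain ⟨j₂, hj₂⟩ := hlift (orderOf (kenyonRoot b m (k₀ + j₁)))
    ((hfin _).one_lt_orderOf fun h => hne (by rw [← hζ k₀ j₁, h, one_pow]))
    (hζ k₀ j₁ ▸ cyclotomic_orderOf_dvd_comp_X_pow (hfin _) _)
  refine ⟨k₀ + j₁ + j₂, by omega,
    aeval_eq_zero_of_cyclotomic_comp_X_pow_dvd (hfin (k₀ + j₁ + j₂)) (N := b ^ j₂) ?_⟩
  rwa [hζ]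
end

section
/- Let b ≥ 2 and let D be a finite set of nonnegative integers. Suppose B is a finite set of vertices of the Protasov tree of b such that every infinite path of the tree meets B in at least one vertex, and such that P_D(e^{2πi m/b^k}) = 0 for every (k,m) ∈ B. Then D satisfies the Kenyon condition with respect to b: for every integer m ≥ 1 there exists k ≥ 1 with P_D(e^{2πi m/b^k}) = 0. -/
open Polynomial

/-- `(k, m)` is a vertex of the Protasov tree of `b`: `k ≥ 1`, `1 ≤ m < b^k`, `b ∤ m`. -/
def IsVertex (b : ℕ) (v : ℕ × ℕ) : Prop :=
  1 ≤ v.1 ∧ 1 ≤ v.2 ∧ v.2 < b ^ v.1 ∧ ¬ b ∣ v.2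

/-- `m` (evaluated for indices `k ≥ 1`) is an infinite path in the Protasov tree of `b`:
`1 ≤ m₁ ≤ b - 1`, `1 ≤ m_{k+1} < b^{k+1}` and `m_{k+1} ≡ m_k (mod b^k)`. -/
def IsPath (b : ℕ) (m : ℕ → ℕ) : Prop :=
  (1 ≤ m 1 ∧ m 1 ≤ b - 1) ∧
    ∀ k : ℕ, 1 ≤ k → 1 ≤ m (k + 1) ∧ m (k + 1) < b ^ (k + 1) ∧ m (k + 1) ≡ m k [MOD b ^ k]

/-!
A multiple `b m` of `m` gives the same root of unity `e^{2πi b m / b^{k+1}} = e^{2πi m / b^k}`,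
so the Kenyon condition only has to be checked for `b ∤ m`. For such `m` the residues
`m mod b^k` form an infinite path of the Protasov tree, which meets `B` at some `(k, m mod b^k)`,
and `e^{2πi m / b^k}` only depends on `m mod b^k`.
-/

lemma Complex.exp_two_pi_I_mul_div_mod (m n : ℕ) :
    Complex.exp (2 * Real.pi * Complex.I * (m : ℂ) / (n : ℂ)) =
      Complex.exp (2 * Real.pi * Complex.I * ((m % n : ℕ) : ℂ) / (n : ℂ)) := by
  rcases eq_or_ne n 0 with rfl | hn
  · simp
  have hn' : (n : ℂ) ≠ 0 := by exact_mod_cast hn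
  have hsplit : 2 * Real.pi * Complex.I * (m : ℂ) / (n : ℂ) =
      2 * Real.pi * Complex.I * ((m % n : ℕ) : ℂ) / (n : ℂ) +
        ((m / n : ℕ) : ℂ) * (2 * Real.pi * Complex.I) := by
    conv_lhs => rw [← Nat.mod_add_div m n]
    push_cast
    field_simp
  rw [hsplit, Complex.exp_add, Complex.exp_nat_mul_two_pi_mul_I, mul_one]

lemma kenyon_of_forall_not_dvd {b : ℕ} (hb : 2 ≤ b) {D : Finset ℕ}
    (h : ∀ m : ℕ, 1 ≤ m → ¬ b ∣ m → ∃ k : ℕ, 1 ≤ k ∧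
      aeval (Complex.exp (2 * Real.pi * Complex.I * (m : ℂ) / (b : ℂ) ^ k)) (mask D) = 0) :
    Kenyon b D := by
  intro m
  induction m using Nat.strong_induction_on with
  | _ m ih =>
    intro hm
    by_cases hdvd : b ∣ m
    · obtain ⟨m', rfl⟩ := hdvd
      have hm' : 1 ≤ m' := Nat.pos_of_mul_pos_left hm
      obtain ⟨k, hk, hz⟩ := ih m' (by nlinarith) hm'
      have hb0 : (b : ℂ) ≠ 0 := by exact_mod_cast (by omega : b ≠ 0)
      have hroot : 2 * Real.pi * Complex.I * ((b * m' : ℕ) : ℂ) / (b : ℂ) ^ (k + 1) =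
          2 * Real.pi * Complex.I * (m' : ℂ) / (b : ℂ) ^ k := by
        push_cast
        field_simp
        ring
      exact ⟨k + 1, by omega, hroot ▸ hz⟩
    · exact h m hm hdvd

lemma isPath_mod_pow {b m : ℕ} (hb : b ≠ 0) (hm : ¬ b ∣ m) : IsPath b (m % b ^ ·) := by
  have hmod_ne (k : ℕ) (hk : 1 ≤ k) : m % b ^ k ≠ 0 := fun h =>
    hm ((dvd_pow_self b (by omega)).trans (Nat.dvd_of_mod_eq_zero h))
  refine ⟨?_, fun k hk => ⟨?_, Nat.mod_lt _ (by positivity), ?_⟩⟩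
  · have := hmod_ne 1 le_rfl
    have := Nat.mod_lt m (Nat.pos_of_ne_zero hb)
    simp only [pow_one] at *
    omega
  · exact Nat.one_le_iff_ne_zero.mpr (hmod_ne (k + 1) (by omega))
  · exact (Nat.mod_mod_of_dvd m (pow_dvd_pow b k.le_succ)).trans (Nat.mod_mod m _).symm

theorem stmt10_general (b : ℕ) (hb : 2 ≤ b) (D : Finset ℕ) (B : Finset (ℕ × ℕ))
    (hBblock : ∀ m : ℕ → ℕ, IsPath b m → ∃ k : ℕ, 1 ≤ k ∧ (k, m k) ∈ B)
    (hBzero : ∀ v ∈ B, Polynomial.aeval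
      (Complex.exp (2 * Real.pi * Complex.I * (v.2 : ℂ) / (b : ℂ) ^ v.1)) (mask D) = 0) :
    Kenyon b D := by
  refine kenyon_of_forall_not_dvd hb fun m _ hm => ?_
  obtain ⟨k, hk, hkB⟩ := hBblock _ (isPath_mod_pow (by omega) hm)
  refine ⟨k, hk, ?_⟩
  have hroot := Complex.exp_two_pi_I_mul_div_mod m (b ^ k)
  push_cast at hroot
  simpa [hroot] using hBzero _ hkB

/-- If a finite set `B` of vertices of the Protasov tree meets every infinite path at least
once and `P_D(e^{2πi m / b^k}) = 0` for all `(k, m) ∈ B`, then `D` satisfies the Kenyon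
condition. -/
theorem stmt10 (b : ℕ) (hb : 2 ≤ b) (D : Finset ℕ) (B : Finset (ℕ × ℕ))
    (hBv : ∀ v ∈ B, IsVertex b v)
    (hBblock : ∀ m : ℕ → ℕ, IsPath b m → ∃ k : ℕ, 1 ≤ k ∧ (k, m k) ∈ B)
    (hBzero : ∀ v ∈ B, Polynomial.aeval
      (Complex.exp (2 * Real.pi * Complex.I * (v.2 : ℂ) / (b : ℂ) ^ v.1)) (mask D) = 0) :
    Kenyon b D :=
  stmt10_general b hb D B hBblock hBzero
end

section
/- Let b ≥ 2, let k ≥ 1, and let m_0 be an integer with 1 ≤ m_0 < b^k and b ∤ m_0; put d = b^k/gcd(m_0, b^k) and C_d = {m : 1 ≤ m < b^k, b ∤ m, b^k/gcd(m, b^k) = d}. Then: (a) the set of integers e > 1 such that Φ_e(X) divides Φ_d(X^b) in ℤ[X] equals the set {b^{k+1}/gcd(ℓb^k + m_0, b^{k+1}) : 0 ≤ ℓ ≤ b−1}; and (b) Φ_d(X^b) = ∏_{m ∈ C_d} ∏_{ℓ=0}^{b−1} (X − e^{2πi(ℓb^k + m)/b^{k+1}}) in ℂ[X]. -/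
/-!
Let `ζ` be a primitive `b^(k+1)`-th root of unity, `η = ζ^b` (a primitive `b^k`-th root) and
`α = η^m₀`, a primitive `d`-th root. The `b`-th roots of `α` are the `ζ^(ℓ b^k + m₀)`, `ℓ < b`,
whose orders are the numbers `b^(k+1) / gcd(ℓ b^k + m₀, b^(k+1))`.

(a) As `Φ_e` is the minimal polynomial over `ℤ` of a primitive `e`-th root `ω`, `Φ_e ∣ Φ_d(X^b)`
iff `ω^b` is a primitive `d`-th root. Replacing `ω` by a Galois conjugate `ω^r`, where `r` is a
unit mod `e` lifting the unit mod `d` that carries `ω^b` to `α`, we may assume `ω^b = α`, so `e`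
is one of the orders above.

(b) `Φ_d(X^b) = ∏ (X^b - μ)` over the primitive `d`-th roots `μ`, which are exactly the `η^m`
with `m ∈ C_d`, and `X^b - η^m = ∏_{ℓ < b} (X - ζ^(ℓ b^k + m))`.
-/

open Finset Polynomial

theorem IsPrimitiveRoot.pow_div_gcd {M : Type*} [CommMonoid M] {ζ : M} {n : ℕ}
    (h : IsPrimitiveRoot ζ n) (hn : 0 < n) (i : ℕ) : IsPrimitiveRoot (ζ ^ i) (n / i.gcd n) := by
  rcases eq_or_ne i 0 with rfl | hi
  · simp [Nat.div_self hn]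
  · rw [Nat.gcd_comm, h.eq_orderOf, ← orderOf_pow' ζ hi]
    exact IsPrimitiveRoot.orderOf _

theorem Nat.exists_coprime_modEq_of_dvd {d e i : ℕ} [NeZero e] (hde : d ∣ e) (hi : i.Coprime d) :
    ∃ r, r.Coprime e ∧ r ≡ i [MOD d] := by
  obtain ⟨v, hv⟩ := ZMod.unitsMap_surjective hde (ZMod.unitOfCoprime i hi)
  refine ⟨(v : ZMod e).val, ZMod.val_coe_unit_coprime v, ?_⟩
  rw [← ZMod.natCast_eq_natCast_iff, ← ZMod.cast_eq_val, ← ZMod.unitsMap_val hde, hv,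
    ZMod.coe_unitOfCoprime]

theorem IsPrimitiveRoot.exists_isPrimitiveRoot_pow_eq {R : Type*} [CommRing R] [IsDomain R]
    {ω α : R} {b d e : ℕ} [NeZero e] (hω : IsPrimitiveRoot ω e)
    (hωb : IsPrimitiveRoot (ω ^ b) d) (hα : IsPrimitiveRoot α d) :
    ∃ ω', IsPrimitiveRoot ω' e ∧ ω' ^ b = α := by
  have hde : d ∣ e := hωb.dvd_of_pow_eq_one _ <| by
    rw [← pow_mul, mul_comm, pow_mul, hω.pow_eq_one, one_pow]
  have : NeZero d := ⟨fun hd => NeZero.ne e (Nat.eq_zero_of_zero_dvd (hd ▸ hde))⟩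
  obtain ⟨i, -, rfl⟩ := hωb.eq_pow_of_pow_eq_one hα.pow_eq_one
  have hi : i.Coprime d := (hωb.pow_iff_coprime (NeZero.pos d) i).mp hα
  obtain ⟨r, hre, hri⟩ := Nat.exists_coprime_modEq_of_dvd hde hi
  refine ⟨ω ^ r, hω.pow_of_coprime r hre, ?_⟩
  rw [← pow_mul, mul_comm, pow_mul, ← pow_mod_orderOf, ← hωb.eq_orderOf, hri, hωb.eq_orderOf,
    pow_mod_orderOf]

theorem cyclotomic_dvd_comp_X_pow_iff {K : Type*} [Field K] [CharZero K] {ω : K} {e d : ℕ}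
    (hω : IsPrimitiveRoot ω e) (he : 0 < e) (hd : 0 < d) (b : ℕ) :
    cyclotomic e ℤ ∣ (cyclotomic d ℤ).comp (X ^ b) ↔ IsPrimitiveRoot (ω ^ b) d := by
  rw [cyclotomic_eq_minpoly hω he, ← minpoly.isIntegrallyClosed_dvd_iff (hω.isIntegral he),
    aeval_comp, aeval_X_pow, aeval_def, eval₂_eq_eval_map, map_cyclotomic, ← IsRoot.def,
    isRoot_cyclotomic_iff_charZero hd]

theorem cyclotomic_comp_X_pow_eq_prod_primitiveRoots {R : Type*} [CommRing R] [IsDomain R]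
    {μ : R} {d : ℕ} (hμ : IsPrimitiveRoot μ d) (b : ℕ) :
    (cyclotomic d R).comp (X ^ b) = ∏ μ ∈ primitiveRoots d R, (X ^ b - C μ) := by
  simp [cyclotomic_eq_prod_X_sub_primitiveRoots hμ, Polynomial.prod_comp]

theorem IsPrimitiveRoot.primitiveRoots_eq_image_pow {R : Type*} [CommRing R] [IsDomain R]
    [DecidableEq R] {η : R} {n d : ℕ} (hη : IsPrimitiveRoot η n) (hn : 0 < n) (hdn : d ∣ n) :
    primitiveRoots d R = ((range n).filter fun m => n / m.gcd n = d).image (η ^ ·) := by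
  have : NeZero n := ⟨hn.ne'⟩
  ext μ
  simp only [mem_image, mem_filter, mem_range, mem_primitiveRoots (Nat.pos_of_dvd_of_pos hdn hn)]
  constructor
  · intro hμ
    obtain ⟨i, hi, rfl⟩ := hη.eq_pow_of_pow_eq_one ((hμ.pow_eq_one_iff_dvd n).2 hdn)
    exact ⟨i, ⟨hi, (hη.pow_div_gcd hn i).unique hμ⟩, rfl⟩
  · rintro ⟨i, ⟨-, rfl⟩, rfl⟩
    exact hη.pow_div_gcd hn i

theorem filter_not_dvd_div_gcd_eq {b n m₀ : ℕ} (hbn : b ∣ n) (hm₀ : 0 < m₀) (hm₀n : m₀ < n)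
    (hbm₀ : ¬ b ∣ m₀) :
    (Ico 1 n).filter (fun m => ¬ b ∣ m ∧ n / m.gcd n = n / m₀.gcd n) =
      (range n).filter (fun m => n / m.gcd n = n / m₀.gcd n) := by
  ext m
  simp only [mem_filter, mem_Ico, mem_range]
  refine ⟨fun ⟨⟨_, hm⟩, _, h⟩ => ⟨hm, h⟩, fun ⟨hm, h⟩ => ?_⟩
  rw [Nat.div_eq_iff_eq_of_dvd_dvd (by omega) (Nat.gcd_dvd_right _ _) (Nat.gcd_dvd_right _ _)]
    at h
  refine ⟨⟨Nat.pos_of_ne_zero ?_, hm⟩, fun hbm => hbm₀ ?_, by rw [h]⟩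
  · rintro rfl
    have hnm₀ : n ∣ m₀ := by rw [← Nat.gcd_zero_left n, h]; exact Nat.gcd_dvd_left m₀ n
    exact absurd (Nat.le_of_dvd hm₀ hnm₀) (by omega)
  · exact (h ▸ Nat.dvd_gcd hbm hbn).trans (Nat.gcd_dvd_left m₀ n)

theorem IsPrimitiveRoot.pow_base_of_pow_succ {M : Type*} [CommMonoid M] {ζ : M} {b k : ℕ}
    (hζ : IsPrimitiveRoot ζ (b ^ (k + 1))) (hb : 0 < b) :
    IsPrimitiveRoot (ζ ^ b) (b ^ k) :=
  hζ.pow (by positivity) (pow_succ' b k)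

theorem IsPrimitiveRoot.pow_mul_pow_add_pow {M : Type*} [CommMonoid M] {ζ : M} {b k : ℕ}
    (hζ : IsPrimitiveRoot ζ (b ^ (k + 1))) (ℓ m : ℕ) :
    (ζ ^ (ℓ * b ^ k + m)) ^ b = (ζ ^ b) ^ m := by
  rw [← pow_mul, show (ℓ * b ^ k + m) * b = b ^ (k + 1) * ℓ + b * m by ring, pow_add, pow_mul,
    hζ.pow_eq_one, one_pow, one_mul, pow_mul]

section PowSucc

variable {R : Type*} [CommRing R] [IsDomain R] {ζ : R} {b k : ℕ}

theorem IsPrimitiveRoot.exists_eq_pow_mul_pow_add_of_pow_eq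
    (hζ : IsPrimitiveRoot ζ (b ^ (k + 1))) (hb : 0 < b) {m : ℕ} (hm : m < b ^ k) {ω : R}
    (hω : ω ^ b = (ζ ^ b) ^ m) : ∃ ℓ < b, ω = ζ ^ (ℓ * b ^ k + m) := by
  have : NeZero (b ^ (k + 1)) := ⟨by positivity⟩
  have hη := hζ.pow_base_of_pow_succ hb
  obtain ⟨n, hn, rfl⟩ := hζ.eq_pow_of_pow_eq_one (by
    rw [pow_succ', pow_mul, hω, pow_right_comm, hη.pow_eq_one, one_pow])
  have hnm : n % b ^ k = m := by
    refine hη.pow_inj (Nat.mod_lt _ (by positivity)) hm ?_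
    rw [hη.eq_orderOf, pow_mod_orderOf, ← hω, pow_right_comm]
  refine ⟨n / b ^ k, Nat.div_lt_of_lt_mul (by rwa [← pow_succ]), ?_⟩
  rw [← hnm, Nat.div_add_mod']

theorem IsPrimitiveRoot.X_pow_sub_C_pow_eq_prod (hζ : IsPrimitiveRoot ζ (b ^ (k + 1)))
    (hb : 0 < b) (m : ℕ) :
    X ^ b - C ((ζ ^ b) ^ m) = ∏ ℓ ∈ range b, (X - C (ζ ^ (ℓ * b ^ k + m))) := by
  rw [X_pow_sub_C_eq_prod (hζ.pow (by positivity) (pow_succ b k)) hb (pow_right_comm ζ m b)]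
  refine prod_congr rfl fun ℓ _ => ?_
  rw [← pow_mul, ← pow_add, mul_comm]

end PowSucc

theorem cyclotomic_comp_X_pow_eq_prod_prod {R : Type*} [CommRing R] [IsDomain R] {ζ : R}
    {b k m₀ : ℕ} (hζ : IsPrimitiveRoot ζ (b ^ (k + 1))) (hb : 0 < b) (hk : k ≠ 0)
    (hm₀ : 0 < m₀) (hm₀' : m₀ < b ^ k) (hbm₀ : ¬ b ∣ m₀) :
    (cyclotomic (b ^ k / m₀.gcd (b ^ k)) R).comp (X ^ b) =
      ∏ m ∈ (Ico 1 (b ^ k)).filter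
          (fun m => ¬ b ∣ m ∧ b ^ k / m.gcd (b ^ k) = b ^ k / m₀.gcd (b ^ k)),
        ∏ ℓ ∈ range b, (X - C (ζ ^ (ℓ * b ^ k + m))) := by
  classical
  have hη := hζ.pow_base_of_pow_succ hb
  have hbk : 0 < b ^ k := by positivity
  rw [cyclotomic_comp_X_pow_eq_prod_primitiveRoots (hη.pow_div_gcd hbk m₀),
    hη.primitiveRoots_eq_image_pow hbk (Nat.div_dvd_of_dvd (Nat.gcd_dvd_right _ _)),
    prod_image fun i hi j hj => hη.pow_inj (mem_range.1 (mem_filter.1 hi).1)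
      (mem_range.1 (mem_filter.1 hj).1),
    filter_not_dvd_div_gcd_eq (dvd_pow_self b hk) hm₀ hm₀' hbm₀]
  exact prod_congr rfl fun m _ => hζ.X_pow_sub_C_pow_eq_prod hb m

theorem one_lt_and_cyclotomic_dvd_comp_X_pow_iff {b k m₀ : ℕ} (hb : 0 < b) (hm₀ : 0 < m₀)
    (hm₀' : m₀ < b ^ k) (e : ℕ) :
    (1 < e ∧ cyclotomic e ℤ ∣ (cyclotomic (b ^ k / m₀.gcd (b ^ k)) ℤ).comp (X ^ b)) ↔
      ∃ ℓ < b, e = b ^ (k + 1) / (ℓ * b ^ k + m₀).gcd (b ^ (k + 1)) := by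
  have hN : 0 < b ^ (k + 1) := by positivity
  have hζ := Complex.isPrimitiveRoot_exp (b ^ (k + 1)) hN.ne'
  have hη := hζ.pow_base_of_pow_succ hb
  have hα := hη.pow_div_gcd (by positivity) m₀
  have hd : 0 < b ^ k / m₀.gcd (b ^ k) :=
    Nat.div_pos (Nat.gcd_le_right _ (by positivity)) (Nat.gcd_pos_of_pos_left _ hm₀)
  constructor
  · rintro ⟨he, hdvd⟩
    have : NeZero e := ⟨by omega⟩
    have hω := Complex.isPrimitiveRoot_exp e (by omega)
    rw [cyclotomic_dvd_comp_X_pow_iff hω (by omega) hd] at hdvd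
    obtain ⟨ω, hω, hωb⟩ := hω.exists_isPrimitiveRoot_pow_eq hdvd hα
    obtain ⟨ℓ, hℓ, rfl⟩ := hζ.exists_eq_pow_mul_pow_add_of_pow_eq hb hm₀' hωb
    exact ⟨ℓ, hℓ, hω.unique (hζ.pow_div_gcd hN _)⟩
  · rintro ⟨ℓ, -, rfl⟩
    have hω := hζ.pow_div_gcd hN (ℓ * b ^ k + m₀)
    have hωb := hζ.pow_mul_pow_add_pow ℓ m₀
    have he : 1 < b ^ (k + 1) / (ℓ * b ^ k + m₀).gcd (b ^ (k + 1)) := by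
      refine lt_of_le_of_ne (Nat.div_pos (Nat.gcd_le_right _ hN) (Nat.gcd_pos_of_pos_right _ hN))
        fun h => hη.pow_ne_one_of_pos_of_lt hm₀.ne' hm₀' ?_
      rw [← h, IsPrimitiveRoot.one_right_iff] at hω
      rw [← hωb, hω, one_pow]
    exact ⟨he, (cyclotomic_dvd_comp_X_pow_iff hω (by omega) hd b).2 (hωb ▸ hα)⟩

/-- (a) The integers `e > 1` with `Φ_e(X) ∣ Φ_d(X^b)` are exactly the values
`b^{k+1}/gcd(ℓb^k + m₀, b^{k+1})` for `0 ≤ ℓ ≤ b-1`; (b) `Φ_d(X^b)` factors in `ℂ[X]` as the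
product of `X - e^{2πi(ℓb^k + m)/b^{k+1}}` over `m ∈ C_d` and `0 ≤ ℓ ≤ b-1`. -/
theorem stmt13 (b k m₀ : ℕ) (hb : 2 ≤ b) (hk : 1 ≤ k)
    (hm₀ : 1 ≤ m₀) (hm₀' : m₀ < b ^ k) (hbm₀ : ¬ b ∣ m₀)
    (d : ℕ) (hd : d = b ^ k / Nat.gcd m₀ (b ^ k)) :
    (∀ e : ℕ, (1 < e ∧ cyclotomic e ℤ ∣ (cyclotomic d ℤ).comp (X ^ b)) ↔
      ∃ ℓ : ℕ, ℓ < b ∧ e = b ^ (k + 1) / Nat.gcd (ℓ * b ^ k + m₀) (b ^ (k + 1))) ∧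
    (cyclotomic d ℂ).comp (X ^ b) =
      ∏ m ∈ (Finset.Ico 1 (b ^ k)).filter
        (fun m => ¬ b ∣ m ∧ b ^ k / Nat.gcd m (b ^ k) = d),
        ∏ ℓ ∈ Finset.range b,
          (X - Polynomial.C (Complex.exp
            (2 * Real.pi * Complex.I * ((ℓ * b ^ k + m : ℕ) : ℂ) / (b : ℂ) ^ (k + 1)))) := by
  subst hd
  have hb0 : 0 < b := by omega
  have hζ := Complex.isPrimitiveRoot_exp (b ^ (k + 1)) (by positivity)
  refine ⟨one_lt_and_cyclotomic_dvd_comp_X_pow_iff hb0 hm₀ hm₀', ?_⟩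
  rw [cyclotomic_comp_X_pow_eq_prod_prod hζ hb0 (by omega) hm₀ hm₀' hbm₀]
  refine prod_congr rfl fun m _ => prod_congr rfl fun ℓ _ => ?_
  rw [← Complex.exp_nat_mul]
  push_cast
  ring_nf
end

section
/- Let b ≥ 2 and let D be a set of exactly b nonnegative integers with 0 ∈ D and gcd(D) = 1 satisfying the Kenyon condition with respect to b (equivalently, by Kenyon's criterion, D is a tile digit set of b). Then there exists a blocking N of the Φ-tree of b such that the kernel polynomial ∏_{d ∈ N} Φ_d(X) divides P_D(X) in ℤ[X]. -/
open Polynomial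

/-- An infinite path in the Φ-tree of `b` (indices `k ≥ 1`). -/
def IsPhiPath (b : ℕ) (d : ℕ → ℕ) : Prop :=
  1 < d 1 ∧ d 1 ∣ b ∧ ∀ k : ℕ, 1 ≤ k → 1 < d (k + 1) ∧
    cyclotomic (d (k + 1)) ℤ ∣ (cyclotomic (d k) ℤ).comp (X ^ b)

/-- A blocking of the Φ-tree of `b`. -/
def IsPhiBlocking (b : ℕ) (N : Finset ℕ) : Prop :=
  (∀ e ∈ N, 1 < e ∧ ∃ d : ℕ → ℕ, IsPhiPath b d ∧ ∃ k : ℕ, 1 ≤ k ∧ d k = e) ∧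
    ∀ d : ℕ → ℕ, IsPhiPath b d → ∃! k : ℕ, 1 ≤ k ∧ d k ∈ N


/-! If `ζ` is a primitive `d j`-th root of unity on a path `d`, then `ζ ^ b ^ (j - k)` is a
primitive `d k`-th root of unity for `k ≤ j`. Hence `d k ∣ b ^ k`, `d k ∤ b ^ (k - 1)` (so a vertex
determines its level and all its ancestors), and `d` grows strictly. For `d j * c = b ^ j`,
Kenyon's condition at `m = c` gives a root `exp (2πi c / b ^ k)` of `P_D`, which is either
`ζ ^ b ^ (j - k)` or a primitive root of order `d j * b ^ (k - j)`; once `d j` exceeds every `n`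
with `Φ_n ∣ P_D`, only the first case is possible. So every path meets this finite set, and the
vertices at which paths first enter it form a blocking. -/

section CyclotomicRoots

variable {K : Type*} [Field K] [CharZero K] {n : ℕ} {z : K}

theorem aeval_cyclotomic_eq_zero_iff (hn : 0 < n) :
    aeval z (cyclotomic n ℤ) = 0 ↔ IsPrimitiveRoot z n := by
  rw [aeval_def, eval₂_eq_eval_map, map_cyclotomic, ← IsRoot.def,
    isRoot_cyclotomic_iff_charZero hn]

theorem IsPrimitiveRoot.cyclotomic_dvd_iff (hz : IsPrimitiveRoot z n) (hn : 0 < n)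
    {f : ℤ[X]} : cyclotomic n ℤ ∣ f ↔ aeval z f = 0 := by
  refine ⟨fun ⟨g, hg⟩ => ?_, fun h => ?_⟩
  · rw [hg, map_mul, (aeval_cyclotomic_eq_zero_iff hn).2 hz, zero_mul]
  · rw [cyclotomic_eq_minpoly hz hn]
    exact minpoly.isIntegrallyClosed_dvd (hz.isIntegral hn) h

theorem IsPrimitiveRoot.pow_of_cyclotomic_dvd_comp {e b : ℕ} (he : 0 < e) (hn : 0 < n)
    (hz : IsPrimitiveRoot z e) (h : cyclotomic e ℤ ∣ (cyclotomic n ℤ).comp (X ^ b)) :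
    IsPrimitiveRoot (z ^ b) n := by
  rw [hz.cyclotomic_dvd_iff he, aeval_comp, map_pow, aeval_X] at h
  exact (aeval_cyclotomic_eq_zero_iff hn).1 h

end CyclotomicRoots

theorem cyclotomic_isRelPrime {m n : ℕ} (hm : 0 < m) (hn : 0 < n) (hmn : m ≠ n) :
    IsRelPrime (cyclotomic m ℤ) (cyclotomic n ℤ) := by
  refine (cyclotomic.irreducible hm).isRelPrime_iff_not_dvd.2 fun h => hmn ?_
  have hζ := Complex.isPrimitiveRoot_exp m hm.ne'
  rw [hζ.cyclotomic_dvd_iff hm, aeval_cyclotomic_eq_zero_iff hn] at h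
  exact hζ.unique h

theorem prod_cyclotomic_dvd {N : Finset ℕ} {f : ℤ[X]}
    (h : ∀ n ∈ N, 0 < n ∧ cyclotomic n ℤ ∣ f) : (∏ n ∈ N, cyclotomic n ℤ) ∣ f :=
  Finset.prod_dvd_of_isRelPrime
    (fun _ hm _ hn hmn => cyclotomic_isRelPrime (h _ hm).1 (h _ hn).1 hmn)
    fun n hn => (h n hn).2

theorem setOf_cyclotomic_dvd_finite {f : ℤ[X]} (hf : f ≠ 0) :
    {n | 0 < n ∧ cyclotomic n ℤ ∣ f}.Finite := by
  refine (f.rootSet_finite ℂ).of_injOn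
    (f := fun n : ℕ => Complex.exp (2 * Real.pi * Complex.I / n))
    (fun n ⟨hn, hdvd⟩ => ?_) fun m ⟨hm, _⟩ n ⟨hn, _⟩ hmn => ?_
  · rw [mem_rootSet_of_ne hf, ← (Complex.isPrimitiveRoot_exp n hn.ne').cyclotomic_dvd_iff hn]
    exact hdvd
  · dsimp only at hmn
    exact (Complex.isPrimitiveRoot_exp m hm.ne').unique
      (hmn ▸ Complex.isPrimitiveRoot_exp n hn.ne')

namespace IsPhiPath

variable {b : ℕ} {d d' : ℕ → ℕ} {i j k : ℕ}

theorem one_lt (hd : IsPhiPath b d) (hk : 1 ≤ k) : 1 < d k := by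
  obtain ⟨k, rfl⟩ := Nat.exists_eq_add_of_le' hk
  cases k with
  | zero => exact hd.1
  | succ k => exact (hd.2.2 (k + 1) (by omega)).1

theorem pos (hd : IsPhiPath b d) (hk : 1 ≤ k) : 0 < d k :=
  zero_lt_one.trans (hd.one_lt hk)

theorem isPrimitiveRoot_pow {K : Type*} [Field K] [CharZero K] (hd : IsPhiPath b d) {z : K}
    (hk : 1 ≤ k) (hkj : k ≤ j) (hz : IsPrimitiveRoot z (d j)) :
    IsPrimitiveRoot (z ^ b ^ (j - k)) (d k) := by
  obtain ⟨t, rfl⟩ := Nat.exists_eq_add_of_le hkj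
  rw [Nat.add_sub_cancel_left]
  induction t generalizing z with
  | zero => simpa using hz
  | succ t ih =>
    obtain ⟨-, hdvd⟩ := hd.2.2 (k + t) (by omega)
    rw [← add_assoc] at hz
    have hz' := hz.pow_of_cyclotomic_dvd_comp (hd.pos (by omega)) (hd.pos (by omega)) hdvd
    rw [pow_succ', pow_mul]
    exact ih (by omega) hz'

theorem dvd_pow (hd : IsPhiPath b d) (hk : 1 ≤ k) : d k ∣ b ^ k := by
  have hζ := Complex.isPrimitiveRoot_exp (d k) (hd.pos hk).ne'
  have hζ1 := hd.isPrimitiveRoot_pow le_rfl hk hζ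
  rw [← hζ.pow_eq_one_iff_dvd, ← pow_sub_one_mul (by omega : k ≠ 0), pow_mul]
  exact (hζ1.pow_eq_one_iff_dvd b).2 hd.2.1

theorem not_dvd_pow_pred (hd : IsPhiPath b d) (hk : 1 ≤ k) : ¬d k ∣ b ^ (k - 1) := by
  intro h
  have hζ := Complex.isPrimitiveRoot_exp (d k) (hd.pos hk).ne'
  have hζ1 := hd.isPrimitiveRoot_pow le_rfl hk hζ
  rw [(hζ.pow_eq_one_iff_dvd _).2 h, IsPrimitiveRoot.one_left_iff] at hζ1
  exact hd.1.ne' hζ1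

theorem eq_div_gcd (hd : IsPhiPath b d) (hb : b ≠ 0) (hk : 1 ≤ k) :
    d k = d (k + 1) / (d (k + 1)).gcd b := by
  have hζ := Complex.isPrimitiveRoot_exp (d (k + 1)) (hd.pos (by omega)).ne'
  have hζb := hd.isPrimitiveRoot_pow hk (Nat.le_add_right k 1) hζ
  rw [Nat.add_sub_cancel_left, pow_one] at hζb
  rw [hζb.eq_orderOf, orderOf_pow' _ hb, ← hζ.eq_orderOf]

theorem lt_succ (hd : IsPhiPath b d) (hb : b ≠ 0) (hk : 1 ≤ k) : d k < d (k + 1) := by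
  have hlt := hd.one_lt (k := k + 1) (by omega)
  rw [hd.eq_div_gcd hb hk]
  refine Nat.div_lt_self (by omega) (lt_of_le_of_ne (Nat.gcd_pos_of_pos_left _ (by omega)) ?_)
  intro hgcd
  have := (Nat.Coprime.pow_right (k + 1) hgcd.symm).eq_one_of_dvd (hd.dvd_pow (by omega))
  omega

theorem lt_apply (hd : IsPhiPath b d) (hb : b ≠ 0) (hk : 1 ≤ k) : k < d k := by
  induction k, hk using Nat.le_induction with
  | base => exact hd.1
  | succ k hk ih => have := hd.lt_succ hb hk; omega

theorem le_of_apply_eq (hd : IsPhiPath b d) (hd' : IsPhiPath b d') {k' : ℕ} (hk : 1 ≤ k)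
    (hk' : 1 ≤ k') (h : d k = d' k') : k ≤ k' := by
  by_contra! hlt
  exact hd.not_dvd_pow_pred hk (h ▸ (hd'.dvd_pow hk').trans (pow_dvd_pow b (by omega)))

theorem apply_eq_of_apply_eq (hd : IsPhiPath b d) (hd' : IsPhiPath b d') (h : d k = d' k)
    (hi : 1 ≤ i) (hik : i ≤ k) : d i = d' i := by
  have hζ := Complex.isPrimitiveRoot_exp (d k) (hd.pos (hi.trans hik)).ne'
  exact (hd.isPrimitiveRoot_pow hi hik hζ).unique (hd'.isPrimitiveRoot_pow hi hik (h ▸ hζ))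

end IsPhiPath

def firstEntries (b : ℕ) (S : Set ℕ) : Set ℕ :=
  {e | ∃ d, IsPhiPath b d ∧ ∃ k, 1 ≤ k ∧ d k = e ∧ e ∈ S ∧
    ∀ i, 1 ≤ i → i < k → d i ∉ S}

theorem firstEntries_subset (b : ℕ) (S : Set ℕ) : firstEntries b S ⊆ S :=
  fun _ ⟨_, _, _, _, h, he, _⟩ => h ▸ he

theorem isPhiBlocking_firstEntries {b : ℕ} {S : Set ℕ} (hS : (firstEntries b S).Finite)
    (hmeet : ∀ d, IsPhiPath b d → ∃ k, 1 ≤ k ∧ d k ∈ S) :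
    IsPhiBlocking b hS.toFinset := by
  classical
  refine ⟨fun e he => ?_, fun d hd => ?_⟩
  · obtain ⟨d, hd, k, hk, rfl, -⟩ := hS.mem_toFinset.1 he
    exact ⟨hd.one_lt hk, d, hd, k, hk, rfl⟩
  have hex := hmeet d hd
  obtain ⟨hk₀, hk₀S⟩ := Nat.find_spec hex
  refine ⟨Nat.find hex, ⟨hk₀, hS.mem_toFinset.2 ⟨d, hd, _, hk₀, rfl, hk₀S,
    fun i hi hik hiS => Nat.find_min hex hik ⟨hi, hiS⟩⟩⟩, ?_⟩
  rintro k ⟨hk, he⟩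
  obtain ⟨d', hd', k', hk', hdk, hkS, hfirst⟩ := hS.mem_toFinset.1 he
  obtain rfl : k' = k :=
    le_antisymm (hd'.le_of_apply_eq hd hk' hk hdk) (hd.le_of_apply_eq hd' hk hk' hdk.symm)
  refine le_antisymm ?_ (Nat.find_min' hex ⟨hk, hkS⟩)
  by_contra! hlt
  exact hfirst _ hk₀ hlt (hd'.apply_eq_of_apply_eq hd hdk hk₀ hlt.le ▸ hk₀S)

section

open Complex

theorem exp_mul_div_pow_eq_pow {b c d j k : ℕ} (hb : b ≠ 0) (hdc : d * c = b ^ j)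
    (hkj : k ≤ j) :
    exp (2 * Real.pi * I * c / (b : ℂ) ^ k) = exp (2 * Real.pi * I / d) ^ b ^ (j - k) := by
  have hd : (d : ℂ) ≠ 0 := by exact_mod_cast left_ne_zero_of_mul (hdc ▸ pow_ne_zero j hb)
  rw [← exp_nat_mul]
  congr 1
  have : (d : ℂ) * c = (b : ℂ) ^ (j - k) * (b : ℂ) ^ k := by
    rw [pow_sub_mul_pow _ hkj]; exact_mod_cast hdc
  field_simp
  push_cast
  linear_combination this

theorem exp_mul_div_pow_eq_exp {b c d j k : ℕ} (hb : b ≠ 0) (hdc : d * c = b ^ j)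
    (hjk : j ≤ k) :
    exp (2 * Real.pi * I * c / (b : ℂ) ^ k) =
      exp (2 * Real.pi * I / ((d * b ^ (k - j) : ℕ) : ℂ)) := by
  have hd : (d : ℂ) ≠ 0 := by exact_mod_cast left_ne_zero_of_mul (hdc ▸ pow_ne_zero j hb)
  congr 1
  have : (d : ℂ) * c * (b : ℂ) ^ (k - j) = (b : ℂ) ^ k := by
    rw [← pow_sub_mul_pow _ hjk, mul_comm _ ((b : ℂ) ^ j)]
    exact_mod_cast congrArg (· * b ^ (k - j)) hdc
  field_simp
  push_cast
  linear_combination this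

theorem Kenyon.exists_cyclotomic_dvd {b : ℕ} {D : Finset ℕ} (hK : Kenyon b D) (hb : b ≠ 0)
    (hbdd : BddAbove {n | 0 < n ∧ cyclotomic n ℤ ∣ mask D}) {d : ℕ → ℕ}
    (hd : IsPhiPath b d) :
    ∃ k, 1 ≤ k ∧ cyclotomic (d k) ℤ ∣ mask D := by
  obtain ⟨B, hB⟩ := hbdd
  have hj : 1 ≤ B + 1 := by omega
  have hdj := hd.lt_apply hb hj
  obtain ⟨c, hc⟩ := hd.dvd_pow hj
  have hc0 : 1 ≤ c := Nat.pos_of_ne_zero (by rintro rfl; simp [hb] at hc)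
  obtain ⟨k, hk, hroot⟩ := hK c hc0
  have hζ := isPrimitiveRoot_exp (d (B + 1)) (by omega)
  rcases le_or_gt k (B + 1) with hkj | hjk
  · refine ⟨k, hk, ?_⟩
    rwa [(hd.isPrimitiveRoot_pow hk hkj hζ).cyclotomic_dvd_iff (hd.pos hk),
      ← exp_mul_div_pow_eq_pow hb hc.symm hkj]
  · rw [exp_mul_div_pow_eq_exp hb hc.symm hjk.le] at hroot
    have hbk : 0 < b ^ (k - (B + 1)) := pow_pos (Nat.pos_of_ne_zero hb) _
    have hn : 0 < d (B + 1) * b ^ (k - (B + 1)) := Nat.mul_pos (by omega) hbk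
    have hle := hB ⟨hn, ((isPrimitiveRoot_exp _ hn.ne').cyclotomic_dvd_iff hn).2 hroot⟩
    have : d (B + 1) ≤ d (B + 1) * b ^ (k - (B + 1)) := Nat.le_mul_of_pos_right _ hbk
    omega

end

theorem mask_ne_zero_s16 {D : Finset ℕ} (hD : D.Nonempty) : mask D ≠ 0 := by
  intro h
  have := congrArg (eval 1) h
  simp [mask, eval_finsetSum, hD.ne_empty] at this

theorem stmt16_general (b : ℕ) (hb : 2 ≤ b) (D : Finset ℕ) (hcard : D.card = b) (hK : Kenyon b D) :
    ∃ N : Finset ℕ, IsPhiBlocking b N ∧ (∏ d ∈ N, cyclotomic d ℤ) ∣ mask D := by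
  set S := {n | 0 < n ∧ cyclotomic n ℤ ∣ mask D}
  have hS : S.Finite :=
    setOf_cyclotomic_dvd_finite (mask_ne_zero_s16 (Finset.card_pos.1 (by omega)))
  have hmeet : ∀ d, IsPhiPath b d → ∃ k, 1 ≤ k ∧ d k ∈ S := fun d hd => by
    obtain ⟨k, hk, hdvd⟩ := hK.exists_cyclotomic_dvd (by omega) hS.bddAbove hd
    exact ⟨k, hk, hd.pos hk, hdvd⟩
  have hN := hS.subset (firstEntries_subset b S)
  exact ⟨hN.toFinset, isPhiBlocking_firstEntries hN hmeet,
    prod_cyclotomic_dvd fun n hn => firstEntries_subset b S (hN.mem_toFinset.1 hn)⟩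

/-- Every tile digit set admits a blocking `N` of the Φ-tree whose kernel polynomial
`∏_{d ∈ N} Φ_d(X)` divides `P_D(X)`. -/
theorem stmt16 (b : ℕ) (hb : 2 ≤ b) (D : Finset ℕ) (hcard : D.card = b)
    (h0 : 0 ∈ D) (hgcd : D.gcd id = 1) (hK : Kenyon b D) :
    ∃ N : Finset ℕ, IsPhiBlocking b N ∧ (∏ d ∈ N, cyclotomic d ℤ) ∣ mask D :=
  stmt16_general b hb D hcard hK
end

section
/- Let b ≥ 2, let D be a finite set of nonnegative integers, and let N be a blocking of the Φ-tree of b such that the kernel polynomial ∏_{d ∈ N} Φ_d(X) divides P_D(X) in ℤ[X]. Then D satisfies the Kenyon condition with respect to b: for every integer m ≥ 1 there exists an integer k ≥ 1 such that P_D(e^{2πi m/b^k}) = 0. -/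
/-! For `q : ℚ`, `exp (2πiq)` is a primitive `q.den`-th root of unity whose `b`-th power is
`exp (2πibq)`, so `Φ_{q.den}` divides `Φ_{(bq).den}(X^b)`. Writing `m = b^t m'` with `b ∤ m'`,
the denominators of `m'/b^k` (`k ≥ 1`) are therefore an infinite path of the Φ-tree. The blocking
meets it at some `k`, so `Φ_{(m'/b^k).den}` divides `P_D`, and `P_D` vanishes at
`exp (2πi m'/b^k) = exp (2πi m/b^(k+t))`. -/

open Polynomial

open Complex

lemma cyclotomic_dvd_comp_X_pow_of_isPrimitiveRoot {K : Type*} [Field K] [CharZero K] {ζ : K}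
    {n r : ℕ} (b : ℕ) (hn : 0 < n) (hr : 0 < r) (hζ : IsPrimitiveRoot ζ n)
    (hζb : IsPrimitiveRoot (ζ ^ b) r) :
    cyclotomic n ℤ ∣ (cyclotomic r ℤ).comp (X ^ b) := by
  rw [cyclotomic_eq_minpoly hζ hn]
  refine minpoly.isIntegrallyClosed_dvd (hζ.isIntegral hn) ?_
  rw [aeval_comp, aeval_X_pow, aeval_def, eval₂_eq_eval_map, map_cyclotomic]
  exact hζb.isRoot_cyclotomic hr

lemma cyclotomic_den_dvd_comp_X_pow (b : ℕ) (q : ℚ) :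
    cyclotomic q.den ℤ ∣ (cyclotomic (b * q).den ℤ).comp (X ^ b) := by
  refine cyclotomic_dvd_comp_X_pow_of_isPrimitiveRoot b q.den_pos (b * q).den_pos
    (isPrimitiveRoot_exp_rat q) ?_
  convert isPrimitiveRoot_exp_rat (b * q) using 1
  rw [← Complex.exp_nat_mul]
  push_cast
  ring_nf

lemma aeval_exp_eq_zero_of_cyclotomic_den_dvd {q : ℚ} {p : ℤ[X]} (h : cyclotomic q.den ℤ ∣ p) :
    aeval (exp (2 * Real.pi * I * q)) p = 0 := by
  refine aeval_eq_zero_of_dvd_aeval_eq_zero h ?_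
  rw [aeval_def, eval₂_eq_eval_map, map_cyclotomic]
  exact (isPrimitiveRoot_exp_rat q).isRoot_cyclotomic q.den_pos

lemma Rat.den_div_natCast_dvd (m n : ℕ) : ((m : ℚ) / n).den ∣ n := by
  have h := Rat.den_dvd m n
  rw [Rat.divInt_eq_div] at h
  simpa using Int.natCast_dvd_natCast.mp h

lemma isPhiPath_den_div_pow {b m : ℕ} (hb : b ≠ 0) (hm : ¬ b ∣ m) :
    IsPhiPath b fun k => ((m : ℚ) / (b ^ k : ℕ)).den := by
  have one_lt_den {k : ℕ} (hk : k ≠ 0) : 1 < ((m : ℚ) / (b ^ k : ℕ)).den := by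
    refine lt_of_le_of_ne (Rat.den_pos _) (Ne.symm ?_)
    rw [Ne, Rat.den_div_natCast_eq_one_iff _ _ (pow_ne_zero k hb)]
    exact fun h => hm ((dvd_pow_self b hk).trans h)
  refine ⟨one_lt_den one_ne_zero, ?_, fun k hk => ⟨one_lt_den (by omega), ?_⟩⟩
  · simpa using Rat.den_div_natCast_dvd m b
  · have hq : (b : ℚ) * (m / (b ^ (k + 1) : ℕ)) = m / (b ^ k : ℕ) := by
      have : (b : ℚ) ≠ 0 := by exact_mod_cast hb
      push_cast
      field_simp
      ring
    simpa only [hq] using cyclotomic_den_dvd_comp_X_pow b ((m : ℚ) / (b ^ (k + 1) : ℕ))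

lemma IsPhiBlocking.exists_cyclotomic_dvd {b : ℕ} {N : Finset ℕ} (hN : IsPhiBlocking b N)
    {d : ℕ → ℕ} (hd : IsPhiPath b d) {p : ℤ[X]} (hp : (∏ e ∈ N, cyclotomic e ℤ) ∣ p) :
    ∃ k, 1 ≤ k ∧ cyclotomic (d k) ℤ ∣ p := by
  obtain ⟨k, ⟨hk, hkN⟩, -⟩ := hN.2 d hd
  exact ⟨k, hk, (Finset.dvd_prod_of_mem (fun e => cyclotomic e ℤ) hkN).trans hp⟩

/-- If the kernel polynomial of a blocking of the Φ-tree divides `P_D(X)`, then `D`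
satisfies the Kenyon condition. -/
theorem stmt17 (b : ℕ) (hb : 2 ≤ b) (D : Finset ℕ) (N : Finset ℕ)
    (hN : IsPhiBlocking b N) (hdvd : (∏ d ∈ N, cyclotomic d ℤ) ∣ mask D) :
    Kenyon b D := by
  intro m hm
  obtain ⟨t, m', hm', rfl⟩ := Nat.exists_eq_pow_mul_and_not_dvd (by omega : m ≠ 0) b (by omega)
  obtain ⟨k, hk, hcyc⟩ := hN.exists_cyclotomic_dvd (isPhiPath_den_div_pow (by omega) hm') hdvd
  refine ⟨k + t, by omega, ?_⟩
  have hq : ((b ^ t * m' : ℕ) : ℚ) / (b ^ (k + t) : ℕ) = m' / (b ^ k : ℕ) := by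
    have : (b : ℚ) ≠ 0 := by exact_mod_cast (by omega : b ≠ 0)
    push_cast
    field_simp
    ring
  convert aeval_exp_eq_zero_of_cyclotomic_den_dvd hcyc using 4
  rw [← hq]
  push_cast
  ring
end
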